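/- arXiv:0802.3467 — 3 statements merged into one kernel-verified Lean document; each statement's English description precedes it below -/
import Mathlib

section
/- For all reals β > 0, c > 0 and u > 0: inf_{q ∈ [0,u)} [ 1 − c u + log( c (u − q) ) + q/(u − q) + β² (u² − q²) ] = f(c,u). Moreover the infimum is attained at q* = 0 when 0 < u ≤ √2/(2β), and at q* = u − √2/(2β) when u > √2/(2β). -/
noncomputable section

namespace SKMulti

/-- The function `f(c,u)` appearing in the Crisanti–Sommers formula for Gaussian spins. -/
def fCS (β c u : ℝ) : ℝ :=
  if u ≤ Real.sqrt 2 / (2 * β) then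
    β ^ 2 * u ^ 2 + Real.log (c * u) - c * u + 1
  else
    (2 * Real.sqrt 2 * β - c) * u + Real.log (c / β) - (1 + Real.log 2) / 2

lemma hasF (y : ℝ) (hy : y ≠ 0) :
    HasDerivAt (fun x : ℝ => Real.log x + x⁻¹ + x - x^2/2)
      (y⁻¹ + (-(y^2)⁻¹) + 1 - (2 : ℕ) * y ^ 1 / 2) y := by
  exact (((Real.hasDerivAt_log hy).add (hasDerivAt_inv hy)).add (hasDerivAt_id y)).sub
    ((hasDerivAt_pow 2 y).div_const 2)

lemma phi_nonneg (x : ℝ) (hx : 0 < x) (hx1 : x ≤ 1) :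
    0 ≤ Real.log x + x⁻¹ + x - x^2/2 - 3/2 := by
  set F : ℝ → ℝ := fun x => Real.log x + x⁻¹ + x - x^2/2 with hF
  have key : AntitoneOn F (Set.Icc x 1) := by
    apply antitoneOn_of_deriv_nonpos (convex_Icc x 1)
    · intro y hy
      exact (hasF y (ne_of_gt (lt_of_lt_of_le hx hy.1))).continuousAt.continuousWithinAt
    · intro y hy
      rw [interior_Icc] at hy
      exact (hasF y (by rcases hy with ⟨h1, h2⟩; nlinarith)).differentiableAt.differentiableWithinAt
    · intro y hy
      rw [interior_Icc] at hy
      obtain ⟨h1, h2⟩ := hy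
      have hy0 : 0 < y := lt_trans hx h1
      rw [(hasF y hy0.ne').deriv]
      have e : y⁻¹ + (-(y^2)⁻¹) + 1 - (2:ℕ) * y ^ 1 / 2 = -((1-y)^2*(1+y)) / y^2 := by
        field_simp
        ring
      rw [e]
      apply div_nonpos_of_nonpos_of_nonneg
      · nlinarith
      · positivity
  have h := key (Set.mem_Icc.2 ⟨le_refl x, hx1⟩) (Set.mem_Icc.2 ⟨hx1, le_refl 1⟩) hx1
  have hF1 : F 1 = 3/2 := by simp [hF, Real.log_one]; norm_num
  rw [hF1] at h
  simpa [hF] using sub_nonneg.2 h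

lemma hasPsi (y : ℝ) (hy : y ≠ 0) :
    HasDerivAt (fun x : ℝ => Real.log x + x^2/2 - 2*x)
      (y⁻¹ + (2:ℕ) * y ^ 1 / 2 - 2) y := by
  have h2 : HasDerivAt (fun x : ℝ => 2*x) 2 y := by
    simpa using (hasDerivAt_id y).const_mul 2
  exact ((Real.hasDerivAt_log hy).add ((hasDerivAt_pow 2 y).div_const 2)).sub h2

lemma psi_nonneg (x : ℝ) (hx : 1 ≤ x) :
    0 ≤ Real.log x + x^2/2 - 2*x + 3/2 := by
  set F : ℝ → ℝ := fun x => Real.log x + x^2/2 - 2*x with hF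
  have key : MonotoneOn F (Set.Icc 1 x) := by
    apply monotoneOn_of_deriv_nonneg (convex_Icc 1 x)
    · intro y hy
      exact (hasPsi y (ne_of_gt (lt_of_lt_of_le one_pos hy.1))).continuousAt.continuousWithinAt
    · intro y hy
      rw [interior_Icc] at hy
      exact (hasPsi y (by rcases hy with ⟨h1, h2⟩; nlinarith)).differentiableAt.differentiableWithinAt
    · intro y hy
      rw [interior_Icc] at hy
      obtain ⟨h1, h2⟩ := hy
      have hy0 : (0:ℝ) < y := by linarith
      rw [(hasPsi y hy0.ne').deriv]
      have e : y⁻¹ + (2:ℕ) * y ^ 1 / 2 - 2 = (y-1)^2 / y := by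
        field_simp; ring
      rw [e]
      positivity
  have h := key (Set.mem_Icc.2 ⟨le_refl 1, hx⟩) (Set.mem_Icc.2 ⟨hx, le_refl x⟩) hx
  have hF1 : F 1 = -3/2 := by simp [hF, Real.log_one]; norm_num
  rw [hF1] at h
  simp only [hF] at h; linarith

lemma lbA (β u : ℝ) (hu : 0 < u) (hβu : β^2 * u^2 ≤ 1/2)
    (t : ℝ) (ht : 0 < t) (htu : t ≤ u) :
    Real.log u + 1 + β^2*u^2 ≤ Real.log t + u/t + 2*β^2*u*t - β^2*t^2 := by
  have hφ := phi_nonneg (t/u) (div_pos ht hu) ((div_le_one hu).2 htu)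
  rw [Real.log_div ht.ne' hu.ne', inv_div] at hφ
  have e2 : t/u - (t/u)^2/2 - 3/2 = -1 - (u-t)^2/(2*u^2) := by
    field_simp; ring
  have h3 : β^2*(u-t)^2 ≤ (u-t)^2/(2*u^2) := by
    rw [le_div_iff₀ (by positivity : (0:ℝ) < 2*u^2)]
    nlinarith [sq_nonneg (u-t)]
  have h4 : 2*β^2*u*t - β^2*t^2 = β^2*u^2 - β^2*(u-t)^2 := by ring
  linarith

lemma lbB (β u a : ℝ) (ha : 0 < a) (hau : a ≤ u) (h2 : 2*β^2*a^2 = 1)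
    (t : ℝ) (ht : 0 < t) (htu : t ≤ u) :
    Real.log a + 2*u/a - 1/2 ≤ Real.log t + u/t + 2*β^2*u*t - β^2*t^2 := by
  have hb2 : β^2 = 1/(2*a^2) := by
    rw [eq_div_iff (by positivity)]; linarith
  rw [hb2]
  rcases le_total t a with h | h
  · have hφ := phi_nonneg (t/a) (div_pos ht ha) ((div_le_one ha).2 h)
    rw [Real.log_div ht.ne' ha.ne', inv_div] at hφ
    have key : (u-a)*(a-t)^2/(a^2*t)
          + (Real.log t - Real.log a + a/t + t/a - (t/a)^2/2 - 3/2)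
        = Real.log t + u/t + 2*(1/(2*a^2))*u*t - 1/(2*a^2)*t^2
          - (Real.log a + 2*u/a - 1/2) := by
      field_simp; ring
    have hpos : 0 ≤ (u-a)*(a-t)^2/(a^2*t) :=
      div_nonneg (mul_nonneg (sub_nonneg.2 hau) (sq_nonneg _)) (by positivity)
    linarith
  · have hψ := psi_nonneg (t/a) ((one_le_div ha).2 h)
    rw [Real.log_div ht.ne' ha.ne'] at hψ
    have key : (u-t)*(t-a)^2/(a^2*t)
          + (Real.log t - Real.log a + (t/a)^2/2 - 2*(t/a) + 3/2)
        = Real.log t + u/t + 2*(1/(2*a^2))*u*t - 1/(2*a^2)*t^2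
          - (Real.log a + 2*u/a - 1/2) := by
      field_simp; ring
    have hpos : 0 ≤ (u-t)*(t-a)^2/(a^2*t) :=
      div_nonneg (mul_nonneg (sub_nonneg.2 htu) (sq_nonneg _)) (by positivity)
    linarith

/-- optimization of the 1-D Crisanti–Sommers functional: for all
`β, c, u > 0`, `inf_{q ∈ [0,u)} [1 − cu + log(c(u−q)) + q/(u−q) + β²(u²−q²)] = f(c,u)`,
the infimum being attained at `q* = 0` when `u ≤ √2/(2β)` and at `q* = u − √2/(2β)` when
`u > √2/(2β)`. -/
theorem crisanti_sommers_inf (β c u : ℝ) (hβ : 0 < β) (hc : 0 < c) (hu : 0 < u) :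
    sInf ((fun q : ℝ =>
        1 - c * u + Real.log (c * (u - q)) + q / (u - q) + β ^ 2 * (u ^ 2 - q ^ 2)) ''
      Set.Ico 0 u) = fCS β c u ∧
    (u ≤ Real.sqrt 2 / (2 * β) →
      1 - c * u + Real.log (c * (u - 0)) + 0 / (u - 0) + β ^ 2 * (u ^ 2 - 0 ^ 2)
        = fCS β c u) ∧
    (Real.sqrt 2 / (2 * β) < u →
      (fun q : ℝ =>
        1 - c * u + Real.log (c * (u - q)) + q / (u - q) + β ^ 2 * (u ^ 2 - q ^ 2))
        (u - Real.sqrt 2 / (2 * β)) = fCS β c u) := by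
  set a : ℝ := Real.sqrt 2 / (2 * β) with haDef
  have hs2 : Real.sqrt 2 * Real.sqrt 2 = 2 := Real.mul_self_sqrt (by norm_num)
  have hs2pos : 0 < Real.sqrt 2 := Real.sqrt_pos.2 (by norm_num)
  have ha : 0 < a := div_pos hs2pos (by positivity)
  have h2a : 2*β^2*a^2 = 1 := by
    rw [haDef]; field_simp; nlinarith
  set g : ℝ → ℝ := fun q =>
    1 - c * u + Real.log (c * (u - q)) + q / (u - q) + β ^ 2 * (u ^ 2 - q ^ 2) with hg
  -- value of g in terms of t = u - q
  have hG : ∀ q ∈ Set.Ico (0:ℝ) u, g q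
      = Real.log c - c*u + (Real.log (u-q) + u/(u-q) + 2*β^2*u*(u-q) - β^2*(u-q)^2) := by
    rintro q ⟨hq0, hqu⟩
    have ht : (0:ℝ) < u - q := sub_pos.2 hqu
    rw [hg]
    simp only
    rw [Real.log_mul hc.ne' ht.ne']
    field_simp
    ring
  by_cases hcase : u ≤ a
  · -- case u ≤ a
    have hβu : β^2 * u^2 ≤ 1/2 := by
      have h1 : u * (2*β) ≤ Real.sqrt 2 := by
        rw [← le_div_iff₀ (by positivity)]; exact hcase
      have h2 := mul_le_mul h1 h1 (by positivity) hs2pos.le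
      nlinarith [h2, hs2]
    have hfval : fCS β c u = Real.log c - c*u
        + (Real.log u + u/u + 2*β^2*u*u - β^2*u^2) := by
      rw [fCS, if_pos hcase, Real.log_mul hc.ne' hu.ne']
      field_simp
      ring
    have hvalsimp : Real.log u + u/u + 2*β^2*u*u - β^2*u^2
        = Real.log u + 1 + β^2*u^2 := by
      rw [div_self hu.ne']; ring
    have hmem : fCS β c u ∈ g '' Set.Ico 0 u := by
      refine ⟨0, ⟨le_refl 0, hu⟩, ?_⟩
      rw [hG 0 ⟨le_refl 0, hu⟩, hfval]
      norm_num
    have hlb : ∀ y ∈ g '' Set.Ico 0 u, fCS β c u ≤ y := by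
      rintro y ⟨q, hq, rfl⟩
      rw [hG q hq, hfval, hvalsimp]
      have ht : (0:ℝ) < u - q := sub_pos.2 hq.2
      have htu : u - q ≤ u := by linarith [hq.1]
      linarith [lbA β u hu hβu (u-q) ht htu]
    refine ⟨IsLeast.csInf_eq ⟨hmem, hlb⟩, fun _ => ?_, fun h => absurd h (not_lt.2 hcase)⟩
    · obtain ⟨q, hq, hgval⟩ := hmem
      have : g 0 = fCS β c u := by
        rw [hG 0 ⟨le_refl 0, hu⟩, hfval]; norm_num
      simpa [hg] using this
  · -- case a < u
    push_neg at hcase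
    have hau : a ≤ u := le_of_lt hcase
    have hloga : Real.log a = -Real.log β - Real.log 2 / 2 := by
      rw [haDef, Real.log_div hs2pos.ne' (by positivity),
        Real.log_sqrt (by norm_num), Real.log_mul (by norm_num) hβ.ne']
      ring
    have hua : 2*u/a = 2*Real.sqrt 2*β*u := by
      rw [haDef]
      rw [div_div_eq_mul_div, div_eq_iff (by positivity : Real.sqrt 2 ≠ 0)]
      linear_combination -2*β*u*hs2
    have hfval : fCS β c u = Real.log c - c*u + (Real.log a + 2*u/a - 1/2) := by
      rw [fCS, if_neg (not_le.2 hcase), Real.log_div hc.ne' hβ.ne', hloga, hua]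
      ring
    have hqstar : u - a ∈ Set.Ico (0:ℝ) u := ⟨by linarith, by linarith⟩
    have hgstar : g (u - a) = fCS β c u := by
      rw [hG (u-a) hqstar, hfval]
      have e1 : u - (u - a) = a := by ring
      rw [e1]
      have e2 : Real.log a + u/a + 2*β^2*u*a - β^2*a^2 = Real.log a + 2*u/a - 1/2 := by
        have hb2 : β^2 = 1/(2*a^2) := by
          rw [eq_div_iff (by positivity)]; linarith
        rw [hb2]
        field_simp
        ring
      rw [e2]
    have hmem : fCS β c u ∈ g '' Set.Ico 0 u := ⟨u - a, hqstar, hgstar⟩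
    have hlb : ∀ y ∈ g '' Set.Ico 0 u, fCS β c u ≤ y := by
      rintro y ⟨q, hq, rfl⟩
      rw [hG q hq, hfval]
      have ht : (0:ℝ) < u - q := sub_pos.2 hq.2
      have htu : u - q ≤ u := by linarith [hq.1]
      linarith [lbB β u a ha hau h2a (u-q) ht htu]
    refine ⟨IsLeast.csInf_eq ⟨hmem, hlb⟩, fun h => absurd h (not_le.2 hcase), fun _ => ?_⟩
    simpa [hg] using hgstar

end SKMulti
end
end

section
/- Let β > 0 and c > 0. If c ≥ 2√2 β, then sup_{u > 0} f(c,u) = β² (u*)² + log(c u*) − c u* + 1, where u* = ( c − √(c² − 8β²) ) / (4β²), and the supremum is attained at u = u*. If 0 < c < 2√2 β, then sup_{u > 0} f(c,u) = +∞ (the function u ↦ f(c,u) is unbounded above on (0,∞)). -/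
/-!
On `0 < u ≤ √2/(2β)` the first branch `β²u² + log(cu) - cu + 1` has second derivative
`2β² - 1/u² ≤ 0`, and `u*` is the smaller root of `2β²u² - cu + 1 = 0`, i.e. a critical point of
this branch, lying in that interval (the product of the two roots is `1/(2β²)`); so `u*` maximises
the first branch. At `√2/(2β)` the two branches agree, and beyond it `f(c, ·)` is affine with slope
`2√2β - c`: nonpositive when `c ≥ 2√2β`, so the maximum stays at `u*`, and positive otherwise, so
`f(c, ·)` is unbounded.
-/

noncomputable section

namespace SKMulti

open Real Set

lemma hasDerivAt_sub_one_sub_mul_sq_sub_log (a : ℝ) {s : ℝ} (hs : s ≠ 0) :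
    HasDerivAt (fun s => s - 1 - a * (s - 1) ^ 2 - log s) ((s - 1) * (1 - 2 * a * s) / s) s := by
  have hsub := (hasDerivAt_id' s).sub_const 1
  refine ((hsub.sub ((hsub.pow 2).const_mul a)).sub (hasDerivAt_log hs)).congr_deriv ?_
  field_simp
  ring

lemma log_le_sub_one_sub_mul_sq {a t : ℝ} (ht : 0 < t) (ha : a ≤ 1 / 2)
    (hat : a * t ^ 2 ≤ 1 / 2) : log t ≤ t - 1 - a * (t - 1) ^ 2 := by
  set h : ℝ → ℝ := fun s => s - 1 - a * (s - 1) ^ 2 - log s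
  have hderiv : ∀ s ∈ Ioi (0 : ℝ), HasDerivAt h ((s - 1) * (1 - 2 * a * s) / s) s :=
    fun s hs => hasDerivAt_sub_one_sub_mul_sq_sub_log a (ne_of_gt hs)
  have hcont : ∀ {D : Set ℝ}, D ⊆ Ioi 0 → ContinuousOn h D := fun hD s hs =>
    (hderiv s (hD hs)).continuousAt.continuousWithinAt
  have hderivOn : ∀ {D : Set ℝ}, D ⊆ Ioi 0 → ∀ s ∈ interior D,
      HasDerivWithinAt h ((s - 1) * (1 - 2 * a * s) / s) (interior D) s := fun hD s hs =>
    (hderiv s (hD (interior_subset hs))).hasDerivWithinAt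
  suffices h 1 ≤ h t by simpa [h] using this
  rcases le_total t 1 with ht1 | ht1
  · have hD : Icc t 1 ⊆ Ioi 0 := fun s hs => ht.trans_le hs.1
    refine antitoneOn_of_hasDerivWithinAt_nonpos (convex_Icc t 1) (hcont hD) (hderivOn hD) ?_
      ⟨le_rfl, ht1⟩ ⟨ht1, le_rfl⟩ ht1
    rw [interior_Icc]
    rintro s ⟨hts, hs1⟩
    have hs : 0 < s := ht.trans hts
    exact div_nonpos_of_nonpos_of_nonneg (mul_nonpos_of_nonpos_of_nonneg (by linarith)
      (by nlinarith)) hs.le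
  · have hD : Icc 1 t ⊆ Ioi 0 := fun s hs => one_pos.trans_le hs.1
    refine monotoneOn_of_hasDerivWithinAt_nonneg (convex_Icc 1 t) (hcont hD) (hderivOn hD) ?_
      ⟨le_rfl, ht1⟩ ⟨ht1, le_rfl⟩ ht1
    rw [interior_Icc]
    rintro s ⟨h1s, hst⟩
    have hs : 0 < s := one_pos.trans h1s
    have : a * s ≤ 1 / 2 := by nlinarith
    exact div_nonneg (mul_nonneg (by linarith) (by linarith)) hs.le

def fQuad (β c u : ℝ) : ℝ :=
  β ^ 2 * u ^ 2 + log (c * u) - c * u + 1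

def uStar (β c : ℝ) : ℝ :=
  (c - √(c ^ 2 - 8 * β ^ 2)) / (4 * β ^ 2)

lemma fCS_of_le {β c u : ℝ} (hu : u ≤ √2 / (2 * β)) : fCS β c u = fQuad β c u :=
  if_pos hu

lemma fCS_of_lt {β c u : ℝ} (hu : √2 / (2 * β) < u) :
    fCS β c u = (2 * √2 * β - c) * u + log (c / β) - (1 + log 2) / 2 :=
  if_neg hu.not_ge

lemma le_sqrt_two_div_iff {β u : ℝ} (hβ : 0 < β) (hu : 0 ≤ u) :
    u ≤ √2 / (2 * β) ↔ 2 * β ^ 2 * u ^ 2 ≤ 1 := by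
  have hsq : (√2 / (2 * β)) ^ 2 = 1 / (2 * β ^ 2) := by
    rw [div_pow, sq_sqrt zero_le_two]
    field_simp
  rw [← pow_le_pow_iff_left₀ hu (by positivity) two_ne_zero, hsq, le_div_iff₀ (by positivity),
    mul_comm]

lemma fCS_eq_of_lt {β c u : ℝ} (hβ : 0 < β) (hc : 0 < c) (hu : √2 / (2 * β) < u) :
    fCS β c u = fQuad β c (√2 / (2 * β)) + (2 * √2 * β - c) * (u - √2 / (2 * β)) := by
  have h2 : √2 ^ 2 = 2 := sq_sqrt zero_le_two
  have hlog : log (c * (√2 / (2 * β))) = log (c / β) - log 2 / 2 := by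
    rw [show c * (√2 / (2 * β)) = c / β * (√2 / 2) by ring, log_mul (by positivity) (by positivity),
      log_div (by positivity) two_ne_zero, log_sqrt zero_le_two]
    ring
  rw [fCS_of_lt hu, fQuad, hlog]
  field_simp
  linear_combination 3 * β * h2

/-- `hcv` says that `v` is a critical point of `fQuad β c`; writing `u = t v` turns the claim
into `log_le_sub_one_sub_mul_sq` with `a = β² v²`. -/
lemma fQuad_le_of_critical {β c u v : ℝ} (hu : 0 < u) (hv : 0 < v)
    (hcv : c * v = 2 * β ^ 2 * v ^ 2 + 1) (hβv : 2 * β ^ 2 * v ^ 2 ≤ 1)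
    (hβu : 2 * β ^ 2 * u ^ 2 ≤ 1) : fQuad β c u ≤ fQuad β c v := by
  have hc : 0 < c := pos_of_mul_pos_left (hcv ▸ by positivity) hv.le
  obtain ⟨t, ht, rfl⟩ : ∃ t, 0 < t ∧ u = t * v := ⟨u / v, by positivity, by field_simp⟩
  have hlog : log (c * (t * v)) = log (c * v) + log t := by
    rw [← log_mul (by positivity) ht.ne', mul_right_comm, mul_assoc]
  have hbound := log_le_sub_one_sub_mul_sq (a := β ^ 2 * v ^ 2) ht (by linarith) (by nlinarith)
  rw [fQuad, fQuad, hlog]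
  nlinarith

section uStar

variable {β c : ℝ} (hβ : 0 < β) (hc : 2 * √2 * β ≤ c)
include hβ hc

lemma sqrt_disc_sq : √(c ^ 2 - 8 * β ^ 2) ^ 2 = c ^ 2 - 8 * β ^ 2 := by
  refine sq_sqrt ?_
  nlinarith [sq_sqrt (zero_le_two : (0 : ℝ) ≤ 2), mul_self_le_mul_self (by positivity) hc]

lemma sqrt_disc_lt : √(c ^ 2 - 8 * β ^ 2) < c := by
  have hc0 : 0 < c := lt_of_lt_of_le (by positivity) hc
  nlinarith [sqrt_disc_sq hβ hc, sqrt_nonneg (c ^ 2 - 8 * β ^ 2)]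

lemma uStar_pos : 0 < uStar β c :=
  div_pos (sub_pos.2 (sqrt_disc_lt hβ hc)) (by positivity)

lemma mul_uStar : c * uStar β c = 2 * β ^ 2 * uStar β c ^ 2 + 1 := by
  have hs := sqrt_disc_sq hβ hc
  rw [uStar]
  field_simp
  linear_combination -2 * hs

lemma two_mul_sq_mul_uStar_sq_le_one : 2 * β ^ 2 * uStar β c ^ 2 ≤ 1 := by
  have hs := sqrt_disc_sq hβ hc
  have hdisc : (c - √(c ^ 2 - 8 * β ^ 2)) ^ 2 ≤ 8 * β ^ 2 := by
    nlinarith [sqrt_disc_lt hβ hc, sqrt_nonneg (c ^ 2 - 8 * β ^ 2)]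
  rw [uStar, div_pow, mul_div_assoc', div_le_one (by positivity)]
  nlinarith [mul_le_mul_of_nonneg_left hdisc (sq_nonneg β)]

lemma uStar_le : uStar β c ≤ √2 / (2 * β) :=
  (le_sqrt_two_div_iff hβ (uStar_pos hβ hc).le).2 (two_mul_sq_mul_uStar_sq_le_one hβ hc)

lemma fCS_le_fQuad_uStar {u : ℝ} (hu : 0 < u) : fCS β c u ≤ fQuad β c (uStar β c) := by
  have hmax : ∀ {v}, 0 < v → v ≤ √2 / (2 * β) → fQuad β c v ≤ fQuad β c (uStar β c) :=
    fun hv hvb => fQuad_le_of_critical hv (uStar_pos hβ hc) (mul_uStar hβ hc)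
      (two_mul_sq_mul_uStar_sq_le_one hβ hc) ((le_sqrt_two_div_iff hβ hv.le).1 hvb)
  rcases le_or_gt u (√2 / (2 * β)) with hub | hub
  · rw [fCS_of_le hub]
    exact hmax hu hub
  · have hslope : (2 * √2 * β - c) * (u - √2 / (2 * β)) ≤ 0 :=
      mul_nonpos_of_nonpos_of_nonneg (by linarith) (by linarith)
    rw [fCS_eq_of_lt hβ (lt_of_lt_of_le (by positivity) hc) hub]
    linarith [hmax (by positivity) le_rfl]

lemma isGreatest_fCS_image : IsGreatest (fCS β c '' Ioi 0) (fQuad β c (uStar β c)) :=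
  ⟨⟨uStar β c, uStar_pos hβ hc, fCS_of_le (uStar_le hβ hc)⟩,
    forall_mem_image.2 fun _ hu => fCS_le_fQuad_uStar hβ hc hu⟩

end uStar

lemma not_bddAbove_fCS_image {β c : ℝ} (hc : c < 2 * √2 * β) :
    ¬BddAbove (fCS β c '' Ioi 0) := by
  obtain ⟨K, hK⟩ : ∃ K, ∀ u, √2 / (2 * β) < u → fCS β c u = (2 * √2 * β - c) * u + K :=
    ⟨log (c / β) - (1 + log 2) / 2, fun _ hu => (fCS_of_lt hu).trans (by ring)⟩
  have hd : 0 < 2 * √2 * β - c := sub_pos.2 hc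
  refine not_bddAbove_iff.2 fun M => ?_
  set u := max 0 (max (√2 / (2 * β)) ((M - K) / (2 * √2 * β - c))) + 1
  have hu : max (√2 / (2 * β)) ((M - K) / (2 * √2 * β - c)) < u :=
    (le_max_right _ _).trans_lt (lt_add_one _)
  have hMK : M - K < (2 * √2 * β - c) * u := (div_lt_iff₀' hd).1 ((le_max_right _ _).trans_lt hu)
  have hu0 : 0 < u := (le_max_left _ _).trans_lt (lt_add_one _)
  refine ⟨fCS β c u, mem_image_of_mem _ hu0, ?_⟩
  rw [hK u ((le_max_left _ _).trans_lt hu)]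
  linarith

theorem crisanti_sommers_sup_general (β c : ℝ) (hβ : 0 < β) :
    (2 * Real.sqrt 2 * β ≤ c →
      sSup ((fun u => fCS β c u) '' Set.Ioi (0 : ℝ)) =
        β ^ 2 * ((c - Real.sqrt (c ^ 2 - 8 * β ^ 2)) / (4 * β ^ 2)) ^ 2 +
          Real.log (c * ((c - Real.sqrt (c ^ 2 - 8 * β ^ 2)) / (4 * β ^ 2))) -
          c * ((c - Real.sqrt (c ^ 2 - 8 * β ^ 2)) / (4 * β ^ 2)) + 1 ∧
      fCS β c ((c - Real.sqrt (c ^ 2 - 8 * β ^ 2)) / (4 * β ^ 2)) =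
        sSup ((fun u => fCS β c u) '' Set.Ioi (0 : ℝ))) ∧
    (c < 2 * Real.sqrt 2 * β →
      ¬ BddAbove ((fun u => fCS β c u) '' Set.Ioi (0 : ℝ))) := by
  refine ⟨fun hc => ?_, not_bddAbove_fCS_image⟩
  rw [(isGreatest_fCS_image hβ hc).csSup_eq]
  exact ⟨rfl, fCS_of_le (uStar_le hβ hc)⟩

/-- the saddle point of the Crisanti–Sommers functional: for `β, c > 0`,
if `c ≥ 2√2 β` then `sup_{u>0} f(c,u)` equals `β²(u*)² + log(c u*) − c u* + 1` with
`u* = (c − √(c² − 8β²))/(4β²)`, the supremum being attained at `u*`; if `c < 2√2 β` then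
`u ↦ f(c,u)` is unbounded above on `(0,∞)`. -/
theorem crisanti_sommers_sup (β c : ℝ) (hβ : 0 < β) (hc : 0 < c) :
    (2 * Real.sqrt 2 * β ≤ c →
      sSup ((fun u => fCS β c u) '' Set.Ioi (0 : ℝ)) =
        β ^ 2 * ((c - Real.sqrt (c ^ 2 - 8 * β ^ 2)) / (4 * β ^ 2)) ^ 2 +
          Real.log (c * ((c - Real.sqrt (c ^ 2 - 8 * β ^ 2)) / (4 * β ^ 2))) -
          c * ((c - Real.sqrt (c ^ 2 - 8 * β ^ 2)) / (4 * β ^ 2)) + 1 ∧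
      fCS β c ((c - Real.sqrt (c ^ 2 - 8 * β ^ 2)) / (4 * β ^ 2)) =
        sSup ((fun u => fCS β c u) '' Set.Ioi (0 : ℝ))) ∧
    (c < 2 * Real.sqrt 2 * β →
      ¬ BddAbove ((fun u => fCS β c u) '' Set.Ioi (0 : ℝ))) :=
  crisanti_sommers_sup_general β c hβ

end SKMulti
end
end

section
/- Monotonicity of the Parisi recursion in the x-parameters: let g : ℝ^d → ℝ be twice continuously differentiable with bounded gradient and Hessian, fix a positive semidefinite chain 0 = Q^{(0)} ⪯ Q^{(1)} ⪯ … ⪯ Q^{(n+1)} = U in Sym(d), and let 0 < x_k ≤ x'_k ≤ 1 for k = 1,…,n. Define F_{n+1}(y) = F'_{n+1}(y) = g(y); F_k(y) = (1/x_k) log ∫ exp( x_k F_{k+1}(y+z) ) dγ_{Q^{(k+1)} − Q^{(k)}}(z) and F'_k(y) = (1/x'_k) log ∫ exp( x'_k F'_{k+1}(y+z) ) dγ_{Q^{(k+1)} − Q^{(k)}}(z) for k = n,…,1; F_0 = ∫ F_1(z) dγ_{Q^{(1)}}(z) and F'_0 = ∫ F'_1(z) dγ_{Q^{(1)}}(z).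 Then F_k(y) ≤ F'_k(y) for every k and y; in particular F_0 ≤ F'_0. -/
/-!
Every step of the recursion is either a Gaussian average `F ↦ ∫ F (· + z) dγ` or the map
`F ↦ x⁻¹ log ∫ exp (x F (· + z)) dγ`, i.e. `x⁻¹` times a cumulant generating function. Both
steps are monotone in `F` and preserve `K`-Lipschitz continuity, so by induction all levels are
Lipschitz like `g`, and all integrals are finite because Gaussian measures have exponential
moments (Fernique). Finally `x ↦ x⁻¹ log E[exp (x X)]` is nondecreasing on `(0, ∞)` by Jensen's
inequality for the concave power `s ↦ s ^ (x / x')`.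
-/

open MeasureTheory ProbabilityTheory Filter Matrix
open scoped Classical

noncomputable section

namespace SKMulti

variable {d : ℕ}

/-- Euclidean dot product on `Fin d → ℝ`. -/
def dotp (x y : Fin d → ℝ) : ℝ := ∑ u, x u * y u

/-- Frobenius (trace) inner product of matrices, `⟨A,B⟩ = tr(Aᵀ B)`. -/
def minner (A B : Matrix (Fin d) (Fin d) ℝ) : ℝ := ∑ u, ∑ v, A u v * B u v

/-- Squared Frobenius norm. -/
def frobSq (A : Matrix (Fin d) (Fin d) ℝ) : ℝ := ∑ u, ∑ v, (A u v) ^ 2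

/-- Frobenius norm. -/
def frobNorm (A : Matrix (Fin d) (Fin d) ℝ) : ℝ := Real.sqrt (frobSq A)

/-- Strict Loewner order: `A ≺ B` iff `B - A` is positive definite. -/
def lLT (A B : Matrix (Fin d) (Fin d) ℝ) : Prop := (B - A).PosDef

/-- Entrywise (Hadamard) square of a matrix. -/
def hadSq (A : Matrix (Fin d) (Fin d) ℝ) : Matrix (Fin d) (Fin d) ℝ := fun u v => (A u v) ^ 2

/-- The standard Gaussian measure on `ℝ^d`. -/
def stdGaussian (d : ℕ) : Measure (Fin d → ℝ) := Measure.pi fun _ => gaussianReal 0 1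

/-- Positive semidefinite square root (junk value `0` off the PSD cone). -/
def matSqrt (S : Matrix (Fin d) (Fin d) ℝ) : Matrix (Fin d) (Fin d) ℝ :=
  if h : S.PosSemidef then
    (h.1.eigenvectorUnitary : Matrix (Fin d) (Fin d) ℝ) *
      diagonal (fun i => Real.sqrt (h.1.eigenvalues i)) *
      (star h.1.eigenvectorUnitary : Matrix (Fin d) (Fin d) ℝ)
  else 0

/-- Centered Gaussian measure on `ℝ^d` with covariance matrix `S` (for `S` PSD):
the image of the standard Gaussian under the linear map `S^{1/2}`. -/
def gaussOf (S : Matrix (Fin d) (Fin d) ℝ) : Measure (Fin d → ℝ) :=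
  (stdGaussian d).map fun z => (matSqrt S).mulVec z

/-- Overlap matrix `R_N(σ,τ)`. -/
def overlap {N : ℕ} (σ τ : Fin N → Fin d → ℝ) : Matrix (Fin d) (Fin d) ℝ :=
  fun u v => (N : ℝ)⁻¹ * ∑ i, σ i u * τ i v

/-- SK Hamiltonian `X_N(σ)` for a disorder realization `g`. -/
def ham {N : ℕ} (g : Fin N → Fin N → ℝ) (σ : Fin N → Fin d → ℝ) : ℝ :=
  (N : ℝ)⁻¹ * ∑ i, ∑ j, g i j * dotp (σ i) (σ j)

/-- Law of the disorder: i.i.d. standard Gaussians `(g_{ij})`. -/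
def disorder (N : ℕ) : Measure (Fin N → Fin N → ℝ) :=
  Measure.pi fun _ => Measure.pi fun _ => gaussianReal 0 1

/-- Local free energy `p_N(𝒱)`. -/
def pN (d : ℕ) (β : ℝ) (μ : Measure (Fin d → ℝ)) (Sset : Set (Fin d → ℝ)) (N : ℕ)
    (V : Set (Matrix (Fin d) (Fin d) ℝ)) (g : Fin N → Fin N → ℝ) : ℝ :=
  (N : ℝ)⁻¹ * Real.log
    (∫ σ in {σ : Fin N → Fin d → ℝ | (∀ i, σ i ∈ Sset) ∧ overlap σ σ ∈ V},
      Real.exp (β * Real.sqrt (N : ℝ) * ham g σ) ∂(Measure.pi fun _ : Fin N => μ))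

/-- Expected (quenched) local free energy `E[p_N(𝒱)]`. -/
def EpN (d : ℕ) (β : ℝ) (μ : Measure (Fin d → ℝ)) (Sset : Set (Fin d → ℝ)) (N : ℕ)
    (V : Set (Matrix (Fin d) (Fin d) ℝ)) : ℝ :=
  ∫ g, pN d β μ Sset N V g ∂(disorder N)

/-- The Parisi recursion: `parisiRec d n x Q g j` is `X_{n+1-j}` (as a function of the
accumulated Gaussian field), with terminal condition `X_{n+1} = g`. -/
def parisiRec (d n : ℕ) (x : ℕ → ℝ) (Q : ℕ → Matrix (Fin d) (Fin d) ℝ)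
    (g : (Fin d → ℝ) → ℝ) : ℕ → (Fin d → ℝ) → ℝ
  | 0 => g
  | j + 1 => fun y =>
      if n - j = 0 then
        ∫ z, parisiRec d n x Q g j (y + z) ∂(gaussOf (Q 1 - Q 0))
      else
        (x (n - j))⁻¹ *
          Real.log (∫ z, Real.exp (x (n - j) * parisiRec d n x Q g j (y + z))
            ∂(gaussOf (Q (n - j + 1) - Q (n - j))))

/-- Terminal condition of the SK Parisi recursion:
`X_{n+1}(y) = log ∫_Σ exp(√2 β ⟨y,σ⟩ + ⟨Λσ,σ⟩) dμ(σ)`. -/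
def terminal (d : ℕ) (β : ℝ) (μ : Measure (Fin d → ℝ)) (Sset : Set (Fin d → ℝ))
    (Λ : Matrix (Fin d) (Fin d) ℝ) (y : Fin d → ℝ) : ℝ :=
  Real.log (∫ σ in Sset, Real.exp (Real.sqrt 2 * β * dotp y σ + dotp (Λ.mulVec σ) σ) ∂μ)

/-- The local Parisi functional `f(x, 𝒬, U, Λ)`. -/
def parisiF (d : ℕ) (β : ℝ) (μ : Measure (Fin d → ℝ)) (Sset : Set (Fin d → ℝ)) (n : ℕ)
    (x : ℕ → ℝ) (Q : ℕ → Matrix (Fin d) (Fin d) ℝ) (U Λ : Matrix (Fin d) (Fin d) ℝ) : ℝ :=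
  - minner Λ U - β ^ 2 / 2 * ∑ k ∈ Finset.Icc 1 n, x k * (frobSq (Q (k + 1)) - frobSq (Q k))
    + parisiRec d n x Q (terminal d β μ Sset Λ) (n + 1) 0

/-- The set `𝒰` of admissible self-overlaps: positive semidefinite symmetric matrices of
operator norm at most `r` (equivalently, `r·1 - U` is also positive semidefinite). -/
def calU (d : ℕ) (r : ℝ) : Set (Matrix (Fin d) (Fin d) ℝ) :=
  {U | U.PosSemidef ∧ (r • (1 : Matrix (Fin d) (Fin d) ℝ) - U).PosSemidef}

/-- Frobenius ball around `U`. -/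
def fball (U : Matrix (Fin d) (Fin d) ℝ) (ε : ℝ) : Set (Matrix (Fin d) (Fin d) ℝ) :=
  {V | frobNorm (V - U) < ε}

end SKMulti

open scoped NNReal

namespace ProbabilityTheory

lemma IsGaussian.integrable_exp_mul_norm {E : Type*} [NormedAddCommGroup E] [NormedSpace ℝ E]
    [MeasurableSpace E] [BorelSpace E] [SecondCountableTopology E] [CompleteSpace E]
    (μ : Measure E) [IsGaussian μ] (b : ℝ) :
    Integrable (fun x ↦ Real.exp (b * ‖x‖)) μ := by
  obtain ⟨C, hC, hint⟩ := IsGaussian.exists_integrable_exp_sq μ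
  refine (hint.const_mul (Real.exp (b ^ 2 / (4 * C)))).mono' (by fun_prop)
    (ae_of_all _ fun x ↦ ?_)
  rw [Real.norm_of_nonneg (Real.exp_nonneg _), ← Real.exp_add, Real.exp_le_exp]
  -- completing the square: `C t² - b t + b² / 4C = C (t - b / 2C)² ≥ 0`
  have : b * ‖x‖ * (4 * C) ≤ (b ^ 2 / (4 * C) + C * ‖x‖ ^ 2) * (4 * C) := by
    field_simp
    nlinarith [sq_nonneg (2 * C * ‖x‖ - b)]
  exact le_of_mul_le_mul_right this (by positivity)

variable {Ω : Type*} {m : MeasurableSpace Ω} {μ : Measure Ω} {X Y : Ω → ℝ} {t a b : ℝ}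

lemma cgf_mono_of_nonneg [IsProbabilityMeasure μ] (hXY : X ≤ᵐ[μ] Y) (ht : 0 ≤ t)
    (htX : Integrable (fun ω ↦ Real.exp (t * X ω)) μ)
    (htY : Integrable (fun ω ↦ Real.exp (t * Y ω)) μ) :
    cgf X μ t ≤ cgf Y μ t :=
  Real.log_le_log (mgf_pos htX) (mgf_mono_of_nonneg hXY ht htY)

lemma inv_mul_cgf_le_inv_mul_cgf [IsProbabilityMeasure μ] (ha : 0 < a) (hab : a ≤ b)
    (hb : Integrable (fun ω ↦ Real.exp (b * X ω)) μ) :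
    a⁻¹ * cgf X μ a ≤ b⁻¹ * cgf X μ b := by
  obtain rfl | hab := hab.eq_or_lt
  · rfl
  have hb0 : 0 < b := ha.trans hab
  have ha_int : Integrable (fun ω ↦ Real.exp (a * X ω)) μ :=
    integrable_exp_mul_of_le_of_le (a := 0) (by simp) hb ha.le hab.le
  have hpow : ∀ ω, Real.exp (b * X ω) ^ (a / b) = Real.exp (a * X ω) := fun ω ↦ by
    rw [← Real.exp_mul]
    field_simp
  have hjensen : mgf X μ a ≤ mgf X μ b ^ (a / b) := by
    have := (Real.strictConcaveOn_rpow (div_pos ha hb0) ((div_lt_one hb0).2 hab)).concaveOn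
      |>.le_map_integral (Real.continuous_rpow_const (div_pos ha hb0).le).continuousOn
      isClosed_Ici (ae_of_all _ fun ω ↦ (Real.exp_pos (b * X ω)).le) hb
      (by simpa only [Function.comp_def, hpow] using ha_int)
    simpa only [hpow, mgf] using this
  have hlog : cgf X μ a ≤ a / b * cgf X μ b := by
    rw [cgf, cgf, ← Real.log_rpow (mgf_pos hb)]
    exact Real.log_le_log (mgf_pos ha_int) hjensen
  calc a⁻¹ * cgf X μ a ≤ a⁻¹ * (a / b * cgf X μ b) := by gcongr
    _ = b⁻¹ * cgf X μ b := by field_simp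

end ProbabilityTheory

namespace LipschitzWith

variable {E : Type*} [NormedAddCommGroup E] [MeasurableSpace E] [OpensMeasurableSpace E]
  {μ : Measure E} {K : ℝ≥0} {f : E → ℝ}

lemma integrable_exp_mul_comp_add (hf : LipschitzWith K f)
    (hμ : ∀ b : ℝ, Integrable (fun z ↦ Real.exp (b * ‖z‖)) μ) (t : ℝ) (y : E) :
    Integrable (fun z ↦ Real.exp (t * f (y + z))) μ := by
  have hc : Continuous f := hf.continuous
  refine ((hμ (|t| * K)).const_mul (Real.exp (t * f y))).mono'
    (Continuous.aestronglyMeasurable (by fun_prop)) (ae_of_all _ fun z ↦ ?_)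
  rw [Real.norm_of_nonneg (Real.exp_nonneg _), ← Real.exp_add, Real.exp_le_exp]
  have hdist : |f (y + z) - f y| ≤ K * ‖z‖ := by
    simpa [Real.dist_eq, dist_eq_norm] using hf.dist_le_mul (y + z) y
  have : t * (f (y + z) - f y) ≤ |t| * K * ‖z‖ := by
    calc t * (f (y + z) - f y) ≤ |t| * |f (y + z) - f y| := by
          rw [← abs_mul]; exact le_abs_self _
      _ ≤ |t| * (K * ‖z‖) := by gcongr
      _ = |t| * K * ‖z‖ := by ring
  linarith

lemma integrable_comp_add [IsProbabilityMeasure μ] (hf : LipschitzWith K f)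
    (hμ : ∀ b : ℝ, Integrable (fun z ↦ Real.exp (b * ‖z‖)) μ) (y : E) :
    Integrable (fun z ↦ f (y + z)) μ := by
  have hc : Continuous f := hf.continuous
  have hnorm : Integrable (fun z : E ↦ ‖z‖) μ :=
    (hμ 1).mono' (by fun_prop) (ae_of_all _ fun z ↦ by
      simpa [Real.norm_eq_abs] using (Real.add_one_le_exp ‖z‖).trans' (by linarith))
  refine ((hnorm.const_mul K).add (integrable_const |f y|)).mono'
    (Continuous.aestronglyMeasurable (by fun_prop)) (ae_of_all _ fun z ↦ ?_)
  have hdist : |f (y + z) - f y| ≤ K * ‖z‖ := by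
    simpa [Real.dist_eq, dist_eq_norm] using hf.dist_le_mul (y + z) y
  rw [Real.norm_eq_abs]
  have := abs_sub_abs_le_abs_sub (f (y + z)) (f y)
  simp only [Pi.add_apply]
  linarith

lemma integral_comp_add [IsProbabilityMeasure μ] (hf : LipschitzWith K f)
    (hμ : ∀ b : ℝ, Integrable (fun z ↦ Real.exp (b * ‖z‖)) μ) :
    LipschitzWith K (fun y ↦ ∫ z, f (y + z) ∂μ) := by
  refine LipschitzWith.of_dist_le_mul fun y y' ↦ ?_
  rw [dist_eq_norm, ← integral_sub (hf.integrable_comp_add hμ y) (hf.integrable_comp_add hμ y')]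
  refine (norm_integral_le_of_norm_le_const (C := K * dist y y')
    (ae_of_all _ fun z ↦ ?_)).trans_eq (by simp)
  simpa [← Real.dist_eq] using hf.dist_le_mul (y + z) (y' + z)

lemma inv_mul_cgf_comp_add [IsProbabilityMeasure μ] (hf : LipschitzWith K f)
    (hμ : ∀ b : ℝ, Integrable (fun z ↦ Real.exp (b * ‖z‖)) μ) {x : ℝ} (hx : 0 < x) :
    LipschitzWith K (fun y ↦ x⁻¹ * cgf (fun z ↦ f (y + z)) μ x) := by
  refine LipschitzWith.of_le_add_mul K fun y y' ↦ ?_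
  have hshift : (fun z ↦ f (y + z)) ≤ᵐ[μ] fun z ↦ f (y' + z) + K * dist y y' :=
    ae_of_all _ fun z ↦ by
      simpa [dist_add_right] using hf.le_add_mul (y + z) (y' + z)
  have hint' := hf.integrable_exp_mul_comp_add hμ x y'
  have hcgf :
      cgf (fun z ↦ f (y + z)) μ x ≤ cgf (fun z ↦ f (y' + z)) μ x + x * (K * dist y y') := by
    calc cgf (fun z ↦ f (y + z)) μ x
        ≤ cgf (fun z ↦ f (y' + z) + K * dist y y') μ x :=
          cgf_mono_of_nonneg hshift hx.le (hf.integrable_exp_mul_comp_add hμ x y) <| by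
            simpa only [mul_add, Real.exp_add] using hint'.mul_const _
      _ = cgf (fun z ↦ f (y' + z)) μ x + x * (K * dist y y') := by
          rw [cgf, mgf_add_const, Real.log_mul (mgf_pos hint').ne' (Real.exp_pos _).ne',
            Real.log_exp, cgf]
  calc x⁻¹ * cgf (fun z ↦ f (y + z)) μ x
      ≤ x⁻¹ * (cgf (fun z ↦ f (y' + z)) μ x + x * (K * dist y y')) := by gcongr
    _ = x⁻¹ * cgf (fun z ↦ f (y' + z)) μ x + K * dist y y' := by field_simp

end LipschitzWith

namespace SKMulti

variable {d n : ℕ}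

instance isGaussian_stdGaussian : IsGaussian (stdGaussian d) := by
  have : stdGaussian d = (ProbabilityTheory.stdGaussian (EuclideanSpace ℝ (Fin d))).map
      (EuclideanSpace.equiv (Fin d) ℝ) := by
    rw [← map_pi_eq_stdGaussian, Measure.map_map (by fun_prop) (by fun_prop)]
    exact (Measure.map_id).symm
  rw [this]
  infer_instance

instance isGaussian_gaussOf (S : Matrix (Fin d) (Fin d) ℝ) : IsGaussian (gaussOf S) :=
  inferInstanceAs <| IsGaussian <|
    (stdGaussian d).map (LinearMap.toContinuousLinearMap (matSqrt S).mulVecLin)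

section ParisiRec

variable {x : ℕ → ℝ} {Q : ℕ → Matrix (Fin d) (Fin d) ℝ} {g : (Fin d → ℝ) → ℝ} {j : ℕ}

lemma parisiRec_succ_of_sub_eq_zero (h : n - j = 0) :
    parisiRec d n x Q g (j + 1) =
      fun y ↦ ∫ z, parisiRec d n x Q g j (y + z) ∂(gaussOf (Q 1 - Q 0)) :=
  funext fun _ ↦ if_pos h

lemma parisiRec_succ_of_sub_ne_zero (h : n - j ≠ 0) :
    parisiRec d n x Q g (j + 1) = fun y ↦
      (x (n - j))⁻¹ * cgf (fun z ↦ parisiRec d n x Q g j (y + z))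
        (gaussOf (Q (n - j + 1) - Q (n - j))) (x (n - j)) :=
  funext fun _ ↦ if_neg h

lemma lipschitzWith_parisiRec {K : ℝ≥0} (hg : LipschitzWith K g)
    (hx : ∀ k, 1 ≤ k → k ≤ n → 0 < x k) : ∀ j, LipschitzWith K (parisiRec d n x Q g j)
  | 0 => hg
  | j + 1 => by
    have ih := lipschitzWith_parisiRec hg hx j
    by_cases h : n - j = 0
    · rw [parisiRec_succ_of_sub_eq_zero h]
      exact ih.integral_comp_add (IsGaussian.integrable_exp_mul_norm _)
    · rw [parisiRec_succ_of_sub_ne_zero h]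
      exact ih.inv_mul_cgf_comp_add (IsGaussian.integrable_exp_mul_norm _)
        (hx _ (by omega) (Nat.sub_le n j))

lemma parisiRec_le_parisiRec {x' : ℕ → ℝ} {K : ℝ≥0} (hg : LipschitzWith K g)
    (hx : ∀ k, 1 ≤ k → k ≤ n → 0 < x k) (hxx' : ∀ k, 1 ≤ k → k ≤ n → x k ≤ x' k) :
    ∀ j y, parisiRec d n x Q g j y ≤ parisiRec d n x' Q g j y
  | 0, _ => le_rfl
  | j + 1, y => by
    have ih := parisiRec_le_parisiRec hg hx hxx' j
    have hx'_pos : ∀ k, 1 ≤ k → k ≤ n → 0 < x' k := fun k h1 h2 ↦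
      (hx k h1 h2).trans_le (hxx' k h1 h2)
    have hF := lipschitzWith_parisiRec (Q := Q) hg hx j
    have hF' := lipschitzWith_parisiRec (Q := Q) hg hx'_pos j
    by_cases h : n - j = 0
    · rw [parisiRec_succ_of_sub_eq_zero h, parisiRec_succ_of_sub_eq_zero h]
      exact integral_mono (hF.integrable_comp_add (IsGaussian.integrable_exp_mul_norm _) y)
        (hF'.integrable_comp_add (IsGaussian.integrable_exp_mul_norm _) y) fun z ↦ ih (y + z)
    · rw [parisiRec_succ_of_sub_ne_zero h, parisiRec_succ_of_sub_ne_zero h]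
      have hpos := hx (n - j) (by omega) (Nat.sub_le n j)
      have hμ := IsGaussian.integrable_exp_mul_norm (gaussOf (Q (n - j + 1) - Q (n - j)))
      calc _ ≤ (x (n - j))⁻¹ * cgf (fun z ↦ parisiRec d n x' Q g j (y + z))
              (gaussOf (Q (n - j + 1) - Q (n - j))) (x (n - j)) := by
            refine mul_le_mul_of_nonneg_left ?_ (inv_nonneg.2 hpos.le)
            exact cgf_mono_of_nonneg (ae_of_all _ fun z ↦ ih (y + z)) hpos.le
              (hF.integrable_exp_mul_comp_add hμ _ y) (hF'.integrable_exp_mul_comp_add hμ _ y)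
        _ ≤ _ := inv_mul_cgf_le_inv_mul_cgf hpos (hxx' _ (by omega) (Nat.sub_le n j))
              (hF'.integrable_exp_mul_comp_add hμ _ y)

end ParisiRec

theorem parisi_recursion_monotone_in_x_general
    (d n : ℕ) (g : (Fin d → ℝ) → ℝ) (hg : ContDiff ℝ 2 g)
    (hgrad : ∃ K : ℝ, ∀ y, ‖fderiv ℝ g y‖ ≤ K)
    (Q : ℕ → Matrix (Fin d) (Fin d) ℝ)
    (x x' : ℕ → ℝ)
    (hx : ∀ k, 1 ≤ k → k ≤ n → 0 < x k)
    (hxx' : ∀ k, 1 ≤ k → k ≤ n → x k ≤ x' k) :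
    (∀ j ≤ n + 1, ∀ y : Fin d → ℝ,
      parisiRec d n x Q g j y ≤ parisiRec d n x' Q g j y) := by
  obtain ⟨K, hK⟩ := hgrad
  have hg_lip : LipschitzWith K.toNNReal g :=
    lipschitzWith_of_nnnorm_fderiv_le (hg.differentiable two_ne_zero) fun y ↦ by
      rw [← NNReal.coe_le_coe, coe_nnnorm]
      exact (hK y).trans (Real.le_coe_toNNReal K)
  exact fun j _ ↦ parisiRec_le_parisiRec hg_lip hx hxx' j

/-- monotonicity of the Parisi recursion in the `x`-parameters: if
`0 < x_k ≤ x'_k ≤ 1` for `k = 1,…,n`, then the recursions built from `x` and `x'` with the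
same chain `𝒬` and terminal condition `g` satisfy `F_k(y) ≤ F'_k(y)` for every level `k`
(`F_k = parisiRec … (n+1−k)`); in particular `F₀ ≤ F'₀`. -/
theorem parisi_recursion_monotone_in_x
    (d n : ℕ) (g : (Fin d → ℝ) → ℝ) (hg : ContDiff ℝ 2 g)
    (hgrad : ∃ K : ℝ, ∀ y, ‖fderiv ℝ g y‖ ≤ K)
    (hHess : ∃ K : ℝ, ∀ y, ‖fderiv ℝ (fderiv ℝ g) y‖ ≤ K)
    (U : Matrix (Fin d) (Fin d) ℝ) (hU : U.PosSemidef)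
    (Q : ℕ → Matrix (Fin d) (Fin d) ℝ)
    (hQ0 : Q 0 = 0) (hQU : Q (n + 1) = U)
    (hQpsd : ∀ k ≤ n + 1, (Q k).PosSemidef)
    (hQmono : ∀ k ≤ n, (Q (k + 1) - Q k).PosSemidef)
    (x x' : ℕ → ℝ)
    (hx : ∀ k, 1 ≤ k → k ≤ n → 0 < x k)
    (hxx' : ∀ k, 1 ≤ k → k ≤ n → x k ≤ x' k)
    (hx' : ∀ k, 1 ≤ k → k ≤ n → x' k ≤ 1) :
    (∀ j ≤ n + 1, ∀ y : Fin d → ℝ,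
      parisiRec d n x Q g j y ≤ parisiRec d n x' Q g j y) :=
  parisi_recursion_monotone_in_x_general d n g hg hgrad Q x x' hx hxx'

end SKMulti
end
end
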